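/- Let X be a Polish space and T : X → X a continuous map whose periodic points form a dense subset of X. Then the set of T-invariant Borel probability measures with full support is a dense Gδ subset of the set of all T-invariant Borel probability measures, equipped with the weak topology. -/

import Mathlib

open MeasureTheory Filter Topology

def InvariantProbMap {X : Type*} [MeasurableSpace X] (T : X → X)
    (μ : ProbabilityMeasure X) : Prop :=
  ∀ A : Set X, MeasurableSet A → μ.toMeasure (T ⁻¹' A) = μ.toMeasure A

def FullSupport {X : Type*} [TopologicalSpace X] [MeasurableSpace X]
    (μ : ProbabilityMeasure X) : Prop :=
  ∀ U : Set X, IsOpen U → U.Nonempty → 0 < μ.toMeasure U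

open scoped ENNReal NNReal unitInterval
open Function

/-!
Full support amounts to positive mass on each set of a countable basis, and `μ ↦ μ U` is lower
semicontinuous for open `U` by the portmanteau theorem, so the measures of full support form a Gδ.
For density, a dense sequence `xₙ` of periodic points gives the invariant measure
`ν = ∑ₙ 2^{-(n+1)} (uniform measure on the orbit of xₙ)`, which charges every nonempty open set;
then `(1 - t) μ + t ν` is invariant and of full support for `t > 0`, and tends to `μ` as `t → 0`.
-/

theorem Finset.sum_range_cyclic_shift {M : Type*} [AddCommMonoid M] (f : ℕ → M) {p : ℕ}
    (hf : f p = f 0) : ∑ i ∈ range p, f (i + 1) = ∑ i ∈ range p, f i := by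
  cases p with
  | zero => simp
  | succ q => rw [sum_range_succ, hf, ← sum_range_succ']

section OrbitMeasure

variable {X : Type*} [MeasurableSpace X] (T : X → X)

-- For a non-periodic `x`, `minimalPeriod T x = 0` and this is the zero measure.
noncomputable def orbitMeasure (x : X) : Measure X :=
  (minimalPeriod T x : ℝ≥0∞)⁻¹ • ∑ i ∈ Finset.range (minimalPeriod T x), Measure.dirac (T^[i] x)

theorem orbitMeasure_apply (x : X) (s : Set X) :
    orbitMeasure T x s =
      (minimalPeriod T x : ℝ≥0∞)⁻¹ * ∑ i ∈ Finset.range (minimalPeriod T x),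
        Measure.dirac (T^[i] x) s := by
  simp [orbitMeasure, Measure.finsetSum_apply]

theorem orbitMeasure_univ {x : X} (hx : x ∈ periodicPts T) : orbitMeasure T x Set.univ = 1 := by
  have hpos : (minimalPeriod T x : ℝ≥0∞) ≠ 0 := by
    exact_mod_cast (minimalPeriod_pos_of_mem_periodicPts hx).ne'
  simp [orbitMeasure_apply, ENNReal.inv_mul_cancel hpos (ENNReal.natCast_ne_top _)]

theorem orbitMeasure_preimage [MeasurableSingletonClass X] (x : X) (s : Set X) :
    orbitMeasure T x (T ⁻¹' s) = orbitMeasure T x s := by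
  have hshift (i : ℕ) : Measure.dirac (T^[i] x) (T ⁻¹' s) = Measure.dirac (T^[i + 1] x) s := by
    simp only [Measure.dirac_apply, iterate_succ_apply']
    rfl
  simp only [orbitMeasure_apply, hshift]
  rw [Finset.sum_range_cyclic_shift (fun i ↦ Measure.dirac (T^[i] x) s)
    (by rw [iterate_minimalPeriod, iterate_zero_apply])]

theorem orbitMeasure_pos {x : X} (hx : x ∈ periodicPts T) {U : Set X} (hxU : x ∈ U) :
    0 < orbitMeasure T x U := by
  have hp := minimalPeriod_pos_of_mem_periodicPts hx
  rw [orbitMeasure_apply]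
  refine ENNReal.mul_pos (ENNReal.inv_ne_zero.2 (ENNReal.natCast_ne_top _)) fun h ↦ ?_
  simpa [Measure.dirac_apply_of_mem hxU] using
    Finset.sum_eq_zero_iff.1 h 0 (Finset.mem_range.2 hp)

noncomputable def orbitSeriesMeasure (x : ℕ → X) : Measure X :=
  Measure.sum fun n ↦ (2⁻¹ : ℝ≥0∞) ^ (n + 1) • orbitMeasure T (x n)

theorem orbitSeriesMeasure_apply (x : ℕ → X) (s : Set X) :
    orbitSeriesMeasure T x s = ∑' n, (2⁻¹ : ℝ≥0∞) ^ (n + 1) * orbitMeasure T (x n) s := by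
  simp [orbitSeriesMeasure, Measure.sum_apply_of_countable]

theorem orbitSeriesMeasure_univ {x : ℕ → X} (hx : ∀ n, x n ∈ periodicPts T) :
    orbitSeriesMeasure T x Set.univ = 1 := by
  simp only [orbitSeriesMeasure_apply, orbitMeasure_univ T (hx _), mul_one,
    ENNReal.tsum_geometric_add_one, ENNReal.one_sub_inv_two, inv_inv]
  exact ENNReal.inv_mul_cancel two_ne_zero ENNReal.ofNat_ne_top

theorem orbitSeriesMeasure_preimage [MeasurableSingletonClass X] (x : ℕ → X) (s : Set X) :
    orbitSeriesMeasure T x (T ⁻¹' s) = orbitSeriesMeasure T x s := by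
  simp only [orbitSeriesMeasure_apply, orbitMeasure_preimage]

theorem orbitSeriesMeasure_pos [TopologicalSpace X] {x : ℕ → X} (hx : ∀ n, x n ∈ periodicPts T)
    (hdense : DenseRange x) {U : Set X} (hU : IsOpen U) (hUne : U.Nonempty) :
    0 < orbitSeriesMeasure T x U := by
  obtain ⟨n, hnU⟩ := hdense.exists_mem_open hU hUne
  rw [orbitSeriesMeasure_apply]
  refine lt_of_lt_of_le ?_ (ENNReal.le_tsum n)
  exact ENNReal.mul_pos (pow_ne_zero _ (ENNReal.inv_ne_zero.2 ENNReal.ofNat_ne_top))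
    (orbitMeasure_pos T (hx n) hnU).ne'

theorem exists_invariantProbMap_fullSupport [MeasurableSingletonClass X] [TopologicalSpace X]
    [SecondCountableTopology X] [Nonempty X] (hper : Dense (periodicPts T)) :
    ∃ ν : ProbabilityMeasure X, InvariantProbMap T ν ∧ FullSupport ν := by
  have : Nonempty (periodicPts T) := hper.nonempty.to_subtype
  obtain ⟨x, hx⟩ := TopologicalSpace.exists_dense_seq (periodicPts T)
  have hper_x (n : ℕ) : (x n : X) ∈ periodicPts T := (x n).2
  refine ⟨⟨orbitSeriesMeasure T (fun n ↦ x n), ⟨orbitSeriesMeasure_univ T hper_x⟩⟩,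
    fun s _ ↦ orbitSeriesMeasure_preimage T _ s,
    fun U hU hUne ↦ orbitSeriesMeasure_pos T hper_x ?_ hU hUne⟩
  exact hper.denseRange_val.comp hx continuous_subtype_val

end OrbitMeasure

namespace MeasureTheory.ProbabilityMeasure

variable {X : Type*} [MeasurableSpace X]

open unitInterval (toNNReal)

noncomputable def mix (μ ν : ProbabilityMeasure X) (t : I) : ProbabilityMeasure X :=
  ⟨toNNReal (σ t) • (μ : Measure X) + toNNReal t • (ν : Measure X),
    ⟨by simp [← ENNReal.coe_add]⟩⟩

theorem mix_apply (μ ν : ProbabilityMeasure X) (t : I) (s : Set X) :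
    (mix μ ν t : Measure X) s =
      toNNReal (σ t) * (μ : Measure X) s + toNNReal t * (ν : Measure X) s :=
  rfl

@[simp]
theorem mix_zero (μ ν : ProbabilityMeasure X) : mix μ ν 0 = μ := by
  ext s
  simp [mix_apply]

theorem continuous_mix [TopologicalSpace X] [OpensMeasurableSpace X]
    (μ ν : ProbabilityMeasure X) : Continuous (mix μ ν) := by
  rw [(toFiniteMeasure_isEmbedding X).continuous_iff]
  have : toFiniteMeasure ∘ mix μ ν = fun t ↦
      toNNReal (σ t) • μ.toFiniteMeasure + toNNReal t • ν.toFiniteMeasure := by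
    ext t s
    simp [mix_apply]
  rw [this]
  fun_prop

theorem isOpen_setOf_measure_pos [TopologicalSpace X] [OpensMeasurableSpace X]
    [HasOuterApproxClosed X] {U : Set X} (hU : IsOpen U) :
    IsOpen {μ : ProbabilityMeasure X | 0 < (μ : Measure X) U} :=
  isOpen_iff_mem_nhds.2 fun _ hμ ↦ eventually_lt_of_lt_liminf
    (hμ.trans_le (le_liminf_measure_open_of_tendsto tendsto_id hU))

end MeasureTheory.ProbabilityMeasure

section Invariant

open ProbabilityMeasure

variable {X : Type*} [MeasurableSpace X] {T : X → X}

theorem InvariantProbMap.mix {μ ν : ProbabilityMeasure X} (hμ : InvariantProbMap T μ)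
    (hν : InvariantProbMap T ν) (t : unitInterval) : InvariantProbMap T (mix μ ν t) := by
  intro A hA
  rw [mix_apply, mix_apply, hμ A hA, hν A hA]

theorem FullSupport.mix [TopologicalSpace X] {ν : ProbabilityMeasure X} (hν : FullSupport ν)
    (μ : ProbabilityMeasure X) {t : unitInterval} (ht : t ≠ 0) : FullSupport (mix μ ν t) := by
  intro U hU hUne
  rw [mix_apply]
  refine lt_of_lt_of_le ?_ le_add_self
  refine ENNReal.mul_pos ?_ (hν U hU hUne).ne'
  rw [ENNReal.coe_ne_zero, ← unitInterval.toNNReal_zero]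
  exact fun h ↦ ht (Subtype.ext (congrArg NNReal.toReal h))

theorem dense_setOf_fullSupport_of_invariantProbMap [TopologicalSpace X] [OpensMeasurableSpace X]
    {ν : ProbabilityMeasure X} (hν : InvariantProbMap T ν) (hν_full : FullSupport ν) :
    Dense {μ : {m : ProbabilityMeasure X // InvariantProbMap T m} | FullSupport μ.1} := by
  rintro ⟨μ, hμ⟩
  have hpath : Continuous fun t ↦ (⟨mix μ ν t, hμ.mix hν t⟩ : {m // InvariantProbMap T m}) :=
    (continuous_mix μ ν).subtype_mk _
  simpa using map_mem_closure hpath (dense_compl_singleton (0 : unitInterval) 0)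
    fun t ht ↦ hν_full.mix μ ht

end Invariant

section Support

open TopologicalSpace

variable {X : Type*} [TopologicalSpace X] [MeasurableSpace X]

theorem isGδ_setOf_fullSupport [SecondCountableTopology X] [OpensMeasurableSpace X]
    [HasOuterApproxClosed X] : IsGδ {μ : ProbabilityMeasure X | FullSupport μ} := by
  have hbasis := isBasis_countableBasis X
  have : {μ : ProbabilityMeasure X | FullSupport μ} =
      ⋂ U ∈ countableBasis X, {μ : ProbabilityMeasure X | 0 < (μ : Measure X) U} := by
    ext μ
    simp only [Set.mem_ofPred_eq, Set.mem_iInter]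
    refine ⟨fun h U hU ↦ h U (hbasis.isOpen hU) (nonempty_of_mem_countableBasis hU),
      fun h U hU ⟨x, hxU⟩ ↦ ?_⟩
    obtain ⟨V, hV, hxV, hVU⟩ := hbasis.exists_subset_of_mem_open hxU hU
    exact (h V hV).trans_le (measure_mono hVU)
  rw [this]
  exact .biInter (countable_countableBasis X) fun U hU ↦
    (ProbabilityMeasure.isOpen_setOf_measure_pos (hbasis.isOpen hU)).isGδ

end Support

theorem fullSupport_dense_Gδ_in_invariant_map_general
    {X : Type*} [TopologicalSpace X] [PolishSpace X] [MeasurableSpace X] [BorelSpace X]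
    (T : X → X)
    (hper : Dense {x : X | ∃ p : ℕ, 1 ≤ p ∧ T^[p] x = x}) :
    Dense {μ : {m : ProbabilityMeasure X // InvariantProbMap T m} | FullSupport μ.1} ∧
    IsGδ {μ : {m : ProbabilityMeasure X // InvariantProbMap T m} | FullSupport μ.1} := by
  refine ⟨fun μ ↦ ?_, isGδ_setOf_fullSupport.preimage continuous_subtype_val⟩
  have : Nonempty X := μ.1.nonempty
  obtain ⟨ν, hν, hν_full⟩ := exists_invariantProbMap_fullSupport T (hper : Dense (periodicPts T))
  exact dense_setOf_fullSupport_of_invariantProbMap hν hν_full μ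

/-- On a Polish space, if the periodic points of a continuous map `T` are dense,
then the `T`-invariant Borel probability measures of full support form a dense Gδ
subset of the set of all `T`-invariant Borel probability measures with the weak
topology. -/
theorem fullSupport_dense_Gδ_in_invariant_map
    {X : Type*} [TopologicalSpace X] [PolishSpace X] [MeasurableSpace X] [BorelSpace X]
    (T : X → X) (hT : Continuous T)
    (hper : Dense {x : X | ∃ p : ℕ, 1 ≤ p ∧ T^[p] x = x}) :
    Dense {μ : {m : ProbabilityMeasure X // InvariantProbMap T m} | FullSupport μ.1} ∧
    IsGδ {μ : {m : ProbabilityMeasure X // InvariantProbMap T m} | FullSupport μ.1} :=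
  fullSupport_dense_Gδ_in_invariant_map_general T hper
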